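/- arXiv:2601.13808 — 2 statements merged into one kernel-verified Lean document; each statement's English description precedes it below -/
import Mathlib

section
/- A Lie group, in particular GL(n, ℂ), has no small subgroups: there exists an open neighborhood U of the identity such that the only subgroup of GL(n, ℂ) contained in U is the trivial subgroup. -/
/-!
If `‖x - 1‖ ≤ 1/2` in a real normed algebra, then squaring moves `x` away from `1`:
`‖x² - 1‖ = ‖2(x - 1) + (x - 1)²‖ ≥ (3/2)‖x - 1‖`. So if every power of `x` stays in the ball of
radius `1/2` about `1`, then `(3/2)ᵏ ‖x - 1‖ ≤ ‖x ^ 2 ^ k - 1‖ ≤ 1/2` for all `k`, forcing `x = 1`.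
Hence no nontrivial subgroup of the units fits in that ball; for `GL(n, ℂ)` use any submultiplicative
matrix norm, e.g. the `L∞` operator norm.
-/

def NoSmallSubgroups (G : Type*) [Group G] [TopologicalSpace G] : Prop :=
  ∃ U : Set G, IsOpen U ∧ (1 : G) ∈ U ∧ ∀ H : Subgroup G, (H : Set G) ⊆ U → H = ⊥

section NormedAlgebra

variable {R : Type*} [NormedRing R] [NormedAlgebra ℝ R]

theorem three_halves_mul_norm_sub_one_le_norm_sq_sub_one {x : R} (hx : ‖x - 1‖ ≤ 1 / 2) :
    3 / 2 * ‖x - 1‖ ≤ ‖x ^ 2 - 1‖ := by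
  set a := x - 1
  have hsq : (2 : ℝ) • a = (x ^ 2 - 1) - a * a := by
    rw [two_smul]; simp only [a]; noncomm_ring
  have h2a : 2 * ‖a‖ ≤ ‖x ^ 2 - 1‖ + ‖a‖ * ‖a‖ := by
    calc 2 * ‖a‖ = ‖(2 : ℝ) • a‖ := by rw [norm_smul, Real.norm_two]
      _ ≤ ‖x ^ 2 - 1‖ + ‖a * a‖ := hsq ▸ norm_sub_le _ _
      _ ≤ ‖x ^ 2 - 1‖ + ‖a‖ * ‖a‖ := by gcongr; exact norm_mul_le _ _
  nlinarith [norm_nonneg a]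

theorem eq_one_of_forall_norm_pow_two_pow_sub_one_le {x : R}
    (h : ∀ k : ℕ, ‖x ^ 2 ^ k - 1‖ ≤ 1 / 2) : x = 1 := by
  have growth : ∀ k : ℕ, (3 / 2 : ℝ) ^ k * ‖x - 1‖ ≤ ‖x ^ 2 ^ k - 1‖ := by
    intro k
    induction k with
    | zero => simp
    | succ k ih =>
      calc (3 / 2 : ℝ) ^ (k + 1) * ‖x - 1‖ = 3 / 2 * ((3 / 2) ^ k * ‖x - 1‖) := by ring
        _ ≤ 3 / 2 * ‖x ^ 2 ^ k - 1‖ := by gcongr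
        _ ≤ ‖(x ^ 2 ^ k) ^ 2 - 1‖ := three_halves_mul_norm_sub_one_le_norm_sq_sub_one (h k)
        _ = ‖x ^ 2 ^ (k + 1) - 1‖ := by rw [← pow_mul, pow_succ]
  by_contra hx
  have hpos : 0 < ‖x - 1‖ := norm_pos_iff.mpr (sub_ne_zero.mpr hx)
  obtain ⟨k, hk⟩ := pow_unbounded_of_one_lt (1 / 2 / ‖x - 1‖) (by norm_num : (1 : ℝ) < 3 / 2)
  rw [div_lt_iff₀ hpos] at hk
  linarith [(growth k).trans (h k)]

theorem Units.noSmallSubgroups : NoSmallSubgroups Rˣ := by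
  refine ⟨Units.val ⁻¹' Metric.ball 1 (1 / 2), Metric.isOpen_ball.preimage Units.continuous_val,
    by simp, fun H hH => ?_⟩
  rw [Subgroup.eq_bot_iff_forall]
  intro g hg
  have hball : ∀ h ∈ H, ‖(h : R) - 1‖ ≤ 1 / 2 := fun h hh =>
    (mem_ball_iff_norm.mp (hH hh)).le
  exact Units.val_eq_one.mp <| eq_one_of_forall_norm_pow_two_pow_sub_one_le fun k => by
    simpa using hball _ (H.pow_mem hg (2 ^ k))

end NormedAlgebra

attribute [local instance] Matrix.linftyOpNormedRing Matrix.linftyOpNormedAlgebra in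
/-- `GL(n, ℂ)` has no small subgroups: there is an open neighbourhood `U` of the
identity such that the only subgroup of `GL(n, ℂ)` contained in `U` is trivial. -/
theorem GL_no_small_subgroups (n : ℕ) :
    ∃ U : Set (GL (Fin n) ℂ), IsOpen U ∧ (1 : GL (Fin n) ℂ) ∈ U ∧
      ∀ H : Subgroup (GL (Fin n) ℂ), (H : Set (GL (Fin n) ℂ)) ⊆ U → H = ⊥ :=
  Units.noSmallSubgroups
end

section
/- For every odd prime p, the subgroup N = { L(1,0,c,d,1) : c, d ∈ ℤ/pℤ } is a normal Sylow p-subgroup of G_p isomorphic to (ℤ/pℤ) × (ℤ/pℤ), and G_p is isomorphic to the semidirect product (ℤ/pℤ)² ⋊ D_{p+1}, where D_{p+1} is the dihedral group of order 2(p+1). -/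
/-!
Let `T ≅ (ℤ/p)²` be the translations `L(1,0,c,d,1)` and `U` the norm-one group
`{a + b√v : a² − v b² = 1}`, embedded as the rotations `L(a,b,0,0,1)`. Stereographic projection
from `−1` identifies `U` with `ℤ/p ∪ {∞}`, so the generator `(a₀, b₀)` has order `p + 1`; with the
reflection `L(1,0,0,0,−1)` it satisfies the dihedral relations, and conjugation of `T` by these
two matrices is the prescribed action `ψ`. This gives `T ⋊[ψ] D_{p+1} → GL₃(ℤ/p)`, injective
because `T` meets the block matrices `L(a,b,0,0,s)` trivially, and onto `G_p` because
`L(a,b,c,d,s) = L(a,b,0,0,s) · L(1,0,sc,sd,1)`. The image of `T` is normal of order `p²` and index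
`2(p+1)`, prime to `p`, hence a Sylow `p`-subgroup.
-/

open Matrix

namespace DihedralGroup

variable {n : ℕ} [NeZero n] {G : Type*} [Group G] {u w : G}

private lemma pow_val_add (hu : u ^ n = 1) (i j : ZMod n) :
    u ^ (i + j).val = u ^ i.val * u ^ j.val := by
  rw [ZMod.val_add, ← pow_add, ← pow_eq_pow_mod _ hu]

private lemma pow_val_sub (hu : u ^ n = 1) (i j : ZMod n) :
    u ^ (j - i).val = (u ^ i.val)⁻¹ * u ^ j.val := by
  rw [eq_inv_mul_iff_mul_eq, ← (Commute.pow_pow_self u _ _).eq, ← pow_val_add hu, sub_add_cancel]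

private lemma pow_mul_eq_mul_inv (hw : w * w = 1) (hwu : w * u * w = u⁻¹) (k : ℕ) :
    u ^ k * w = w * (u ^ k)⁻¹ := by
  have h := map_pow (MulAut.conj w) u k
  rw [MulAut.conj_apply, MulAut.conj_apply, inv_eq_of_mul_eq_one_right hw, hwu, inv_pow] at h
  rw [← h, ← mul_assoc, ← mul_assoc, hw, one_mul]

def lift (hu : u ^ n = 1) (hw : w * w = 1) (hwu : w * u * w = u⁻¹) : DihedralGroup n →* G where
  toFun
    | r i => u ^ i.val
    | sr i => w * u ^ i.val
  map_one' := by simp [one_def, -r_zero]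
  map_mul' x y := by
    have hcomm := pow_mul_eq_mul_inv hw hwu
    rcases x with i | i <;> rcases y with j | j
    · simp only [r_mul_r, pow_val_add hu]
    · simp only [r_mul_sr, pow_val_sub hu, ← mul_assoc, hcomm]
    · simp only [sr_mul_r, pow_val_add hu, mul_assoc]
    · simp only [sr_mul_sr, pow_val_sub hu, mul_assoc, ← mul_assoc (u ^ _) w, hcomm]
      rw [← mul_assoc w w, hw, one_mul]

variable (hu : u ^ n = 1) (hw : w * w = 1) (hwu : w * u * w = u⁻¹)

@[simp] lemma lift_r (i : ZMod n) : lift hu hw hwu (r i) = u ^ i.val := rfl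

@[simp] lemma lift_sr (i : ZMod n) : lift hu hw hwu (sr i) = w * u ^ i.val := rfl

lemma lift_r_one [Fact (1 < n)] : lift hu hw hwu (r 1) = u := by
  rw [lift_r, ZMod.val_one, pow_one]

lemma lift_sr_zero : lift hu hw hwu (sr 0) = w := by
  rw [lift_sr, ZMod.val_zero, pow_zero, mul_one]

lemma lift_r_natCast (k : ℕ) : lift hu hw hwu (r k) = u ^ k := by
  rw [lift_r, ZMod.val_natCast, ← pow_eq_pow_mod _ hu]

lemma lift_sr_natCast (k : ℕ) : lift hu hw hwu (sr k) = w * u ^ k := by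
  rw [lift_sr, ZMod.val_natCast, ← pow_eq_pow_mod _ hu]

lemma lift_injective (hn : orderOf u = n) (hw_notMem : w ∉ Subgroup.zpowers u) :
    Function.Injective (lift hu hw hwu) := by
  rw [injective_iff_map_eq_one]
  rintro (i | i) h
  · have hdvd : orderOf u ∣ i.val := orderOf_dvd_of_pow_eq_one h
    rw [hn] at hdvd
    rw [(ZMod.val_eq_zero i).mp (Nat.eq_zero_of_dvd_of_lt hdvd (ZMod.val_lt i)), r_zero]
  · refine absurd ?_ hw_notMem
    rw [lift_sr, mul_eq_one_iff_eq_inv] at h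
    exact h ▸ inv_mem (Subgroup.npow_mem_zpowers u i.val)

end DihedralGroup

namespace SemidirectProduct

variable {N G H : Type*} [Group N] [Group G] [Group H] {φ : G →* MulAut N}

lemma lift_injective {fn : N →* H} {fg : G →* H}
    {h : ∀ g, fn.comp (φ g).toMonoidHom = (MulAut.conj (fg g)).toMonoidHom.comp fn}
    (hn : Function.Injective fn) (hg : Function.Injective fg)
    (hdisj : Disjoint fn.range fg.range) : Function.Injective (lift fn fg h) := by
  rw [injective_iff_map_eq_one]
  rintro ⟨m, g⟩ hmg
  have hinv : fg g = fn m⁻¹ := by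
    rw [map_inv]
    exact eq_inv_of_mul_eq_one_right hmg
  have hg1 : g = 1 :=
    hg (Subgroup.disjoint_def.mp hdisj ⟨m⁻¹, hinv.symm⟩ ⟨g, rfl⟩ |>.trans (map_one fg).symm)
  subst hg1
  have hm1 : m = 1 := hn (by simpa using hmg)
  subst hm1
  rfl

lemma index_range_inl : (inl : N →* N ⋊[φ] G).range.index = Nat.card G := by
  rw [range_inl_eq_ker_rightHom, Subgroup.index_ker,
    MonoidHom.range_eq_top_of_surjective _ rightHom_surjective, Subgroup.card_top]

variable (e : N ⋊[φ] G ≃* H)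

lemma normal_map_range_inl : ((inl.range).map e.toMonoidHom).Normal :=
  range_inl_eq_ker_rightHom (φ := φ) ▸ (MonoidHom.normal_ker _).map _ e.surjective

lemma index_map_range_inl : ((inl.range).map e.toMonoidHom).index = Nat.card G := by
  rw [Subgroup.index_map_of_bijective e.bijective, index_range_inl]

noncomputable def mapRangeInlEquiv : (inl.range).map e.toMonoidHom ≃* N :=
  ((MonoidHom.ofInjective inl_injective).trans (inl.range.equivMapOfInjective _ e.injective)).symm

end SemidirectProduct

lemma Nat.Prime.not_dvd_two_mul_succ {p : ℕ} (hp : p.Prime) (hodd : Odd p) :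
    ¬ p ∣ 2 * (p + 1) := by
  rw [hp.dvd_mul, not_or]
  refine ⟨fun h => ?_, fun h => hp.one_lt.ne' (Nat.dvd_one.mp ((Nat.dvd_add_right dvd_rfl).mp h))⟩
  obtain rfl := (Nat.prime_dvd_prime_iff_eq hp Nat.prime_two).mp h
  exact Nat.not_odd_iff_even.mpr even_two hodd

namespace Gp

open QuadraticAlgebra

variable {R : Type*} [CommRing R] (v : R)

def L (a b c d s : R) : Matrix (Fin 3) (Fin 3) R :=
  !![a, s * v * b, 0; b, s * a, 0; c, d, s]

/-- The pairs `(a, b)` with `a² − v b² = 1`, as the norm-one elements `a + b√v` of `R[√v]`. -/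
abbrev NormOne : Type _ := unitary (QuadraticAlgebra R v 0)

variable {v}

lemma L_mul {a b c d s : R} (hs : s = 1 ∨ s = -1) (a' b' c' d' s' : R) :
    L v a b c d s * L v a' b' c' d' s' =
      L v (a * a' + s * v * b * b') (a' * b + s * a * b') (a' * c + b' * d + s * c')
        (s' * (v * b' * c + a' * d) + s * d') (s * s') := by
  rcases hs with rfl | rfl <;>
  · simp only [L, mul_fin_three, EmbeddingLike.apply_eq_iff_eq, vecCons_inj, and_true]
    and_intros <;> ring

lemma L_one : L v 1 0 0 0 1 = 1 := by
  simp [L, one_fin_three]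

lemma L_inj {a b c d s a' b' c' d' s' : R} :
    L v a b c d s = L v a' b' c' d' s' ↔ a = a' ∧ b = b' ∧ c = c' ∧ d = d' ∧ s = s' := by
  refine ⟨fun h => ?_, by rintro ⟨rfl, rfl, rfl, rfl, rfl⟩; rfl⟩
  have e := fun i j => congrFun (congrFun h i) j
  exact ⟨e 0 0, e 1 0, e 2 0, e 2 1, e 2 2⟩

namespace NormOne

lemma re_sq_sub_mul_im_sq (u : NormOne v) : u.1.re ^ 2 - v * u.1.im ^ 2 = 1 := by
  have h := QuadraticAlgebra.norm_eq_one u.2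
  rw [QuadraticAlgebra.norm_def] at h
  linear_combination h

def mk (a b : R) (h : a ^ 2 - v * b ^ 2 = 1) : NormOne v :=
  ⟨⟨a, b⟩, QuadraticAlgebra.mem_unitary (by rw [QuadraticAlgebra.norm_def]; linear_combination h)⟩

lemma ext {u u' : NormOne v} (hre : u.1.re = u'.1.re) (him : u.1.im = u'.1.im) : u = u' :=
  Subtype.ext (QuadraticAlgebra.ext hre him)

@[simp] lemma re_inv (u : NormOne v) : (u⁻¹).1.re = u.1.re := by
  simp [← Unitary.star_eq_inv, Unitary.coe_star]

@[simp] lemma im_inv (u : NormOne v) : (u⁻¹).1.im = -u.1.im := by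
  simp [← Unitary.star_eq_inv, Unitary.coe_star]

end NormOne

lemma exists_pow_eq_of_recursion {u₀ : NormOne v}
    (hgen : ∃ f : ℕ → R × R, f 0 = (1, 0) ∧
      (∀ n, f (n + 1) = (u₀.1.re * (f n).1 + v * u₀.1.im * (f n).2,
        u₀.1.re * (f n).2 + u₀.1.im * (f n).1)) ∧
      ∀ x : R × R, x.1 ^ 2 - v * x.2 ^ 2 = 1 → ∃ n, f n = x)
    (u : NormOne v) : ∃ k : ℕ, u₀ ^ k = u := by
  obtain ⟨f, h0, hsucc, hsurj⟩ := hgen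
  have hf (n : ℕ) : f n = ((u₀ ^ n).1.re, (u₀ ^ n).1.im) := by
    induction n with
    | zero => simpa using h0
    | succ n ih =>
      rw [hsucc, ih, pow_succ']
      simp only [Submonoid.coe_mul, re_mul, im_mul, zero_mul, add_zero]
  obtain ⟨k, hk⟩ := hsurj (u.1.re, u.1.im) u.re_sq_sub_mul_im_sq
  rw [hf, Prod.mk.injEq] at hk
  exact ⟨k, NormOne.ext hk.1 hk.2⟩

variable (v) in
def translation : Multiplicative (R × R) →* GL (Fin 3) R :=
  MonoidHom.toHomUnits
    { toFun m := L v 1 0 m.toAdd.1 m.toAdd.2 1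
      map_one' := L_one
      map_mul' m m' := by
        rw [L_mul (Or.inl rfl)]
        exact L_inj.mpr ⟨by ring, by ring, by simp, by simp, by ring⟩ }

def rotation : NormOne v →* GL (Fin 3) R :=
  MonoidHom.toHomUnits
    { toFun u := L v u.1.re u.1.im 0 0 1
      map_one' := L_one
      map_mul' u u' := by
        rw [L_mul (Or.inl rfl)]
        exact L_inj.mpr ⟨by simp, by simp; ring, by ring, by ring, by ring⟩ }

lemma L_reflection_mul_self : L v 1 0 0 0 (-1) * L v 1 0 0 0 (-1) = 1 := by
  rw [L_mul (Or.inr rfl), ← L_one]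
  exact L_inj.mpr ⟨by ring, by ring, by ring, by ring, by ring⟩

variable (v) in
def reflection : GL (Fin 3) R :=
  ⟨L v 1 0 0 0 (-1), L v 1 0 0 0 (-1), L_reflection_mul_self, L_reflection_mul_self⟩

@[simp] lemma coe_translation (m : Multiplicative (R × R)) :
    (translation v m : Matrix (Fin 3) (Fin 3) R) = L v 1 0 m.toAdd.1 m.toAdd.2 1 := rfl

@[simp] lemma coe_rotation (u : NormOne v) :
    (rotation u : Matrix (Fin 3) (Fin 3) R) = L v u.1.re u.1.im 0 0 1 := rfl

@[simp] lemma coe_reflection :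
    (reflection v : Matrix (Fin 3) (Fin 3) R) = L v 1 0 0 0 (-1) := rfl

def rotateVec (u : NormOne v) (x : R × R) : R × R :=
  (u.1.re * x.1 - u.1.im * x.2, u.1.re * x.2 - v * u.1.im * x.1)

lemma rotateVec_one (x : R × R) : rotateVec (1 : NormOne v) x = x := by
  simp [rotateVec]

lemma rotateVec_mul (u u' : NormOne v) (x : R × R) :
    rotateVec (u * u') x = rotateVec u (rotateVec u' x) := by
  simp only [rotateVec, Submonoid.coe_mul, re_mul, im_mul, Prod.mk.injEq]
  constructor <;> ring

lemma rotateVec_add (u : NormOne v) (x y : R × R) :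
    rotateVec u (x + y) = rotateVec u x + rotateVec u y := by
  simp only [rotateVec, Prod.fst_add, Prod.snd_add, Prod.mk_add_mk, Prod.mk.injEq]
  constructor <;> ring

def rotate : NormOne v →* MulAut (Multiplicative (R × R)) where
  toFun u :=
    { toFun m := .ofAdd (rotateVec u m.toAdd)
      invFun m := .ofAdd (rotateVec u⁻¹ m.toAdd)
      left_inv m := by simp [← rotateVec_mul, rotateVec_one]
      right_inv m := by simp [← rotateVec_mul, rotateVec_one]
      map_mul' m m' := rotateVec_add u m.toAdd m'.toAdd }
  map_one' := MulEquiv.ext fun m => rotateVec_one m.toAdd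
  map_mul' u u' := MulEquiv.ext fun m => rotateVec_mul u u' m.toAdd

@[simp] lemma toAdd_rotate (u : NormOne v) (m : Multiplicative (R × R)) :
    (rotate u m).toAdd = rotateVec u m.toAdd :=
  rfl

variable (R) in
def reflect : MulAut (Multiplicative (R × R)) :=
  AddEquiv.toMultiplicative ((AddEquiv.neg R).prodCongr (AddEquiv.refl R))

@[simp] lemma toAdd_reflect (m : Multiplicative (R × R)) :
    (reflect R m).toAdd = (-m.toAdd.1, m.toAdd.2) :=
  rfl

lemma reflect_mul_self : reflect R * reflect R = 1 :=
  MulEquiv.ext fun _ => Prod.ext (neg_neg _) rfl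

lemma reflect_mul_rotate_mul_reflect (u : NormOne v) :
    reflect R * rotate u * reflect R = rotate u⁻¹ :=
  MulEquiv.ext fun m => Multiplicative.toAdd.injective <| by
    simp only [MulAut.mul_apply, toAdd_reflect, toAdd_rotate, rotateVec, NormOne.re_inv,
      NormOne.im_inv, Prod.mk.injEq]
    constructor <;> ring

lemma translation_rotate (u : NormOne v) (m : Multiplicative (R × R)) :
    translation v (rotate u m) = MulAut.conj (rotation u) (translation v m) := by
  have hu := u.re_sq_sub_mul_im_sq
  rw [MulAut.conj_apply, eq_mul_inv_iff_mul_eq]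
  ext : 1
  simp only [Units.val_mul, coe_rotation, coe_translation]
  rw [L_mul (Or.inl rfl), L_mul (Or.inl rfl)]
  refine L_inj.mpr ⟨by ring, by ring, ?_, ?_, rfl⟩ <;> simp only [toAdd_rotate, rotateVec]
  · linear_combination m.toAdd.1 * hu
  · linear_combination m.toAdd.2 * hu

lemma translation_reflect (m : Multiplicative (R × R)) :
    translation v (reflect R m) = MulAut.conj (reflection v) (translation v m) := by
  rw [MulAut.conj_apply, eq_mul_inv_iff_mul_eq]
  ext : 1
  simp only [Units.val_mul, coe_reflection, coe_translation]
  rw [L_mul (Or.inr rfl), L_mul (Or.inl rfl)]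
  refine L_inj.mpr ⟨by ring, by ring, ?_, ?_, by ring⟩ <;> simp

lemma reflection_mul_rotation_mul_reflection (u : NormOne v) :
    reflection v * rotation u * reflection v = rotation u⁻¹ := by
  ext : 1
  simp only [Units.val_mul, coe_reflection, coe_rotation, NormOne.re_inv, NormOne.im_inv]
  rw [L_mul (Or.inr rfl), L_mul (Or.inr (by ring))]
  exact L_inj.mpr ⟨by ring, by ring, by ring, by ring, by ring⟩

lemma reflection_mul_self : reflection v * reflection v = 1 :=
  Units.ext L_reflection_mul_self

lemma coe_reflection_mul_rotation (u : NormOne v) :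
    ((reflection v * rotation u : GL (Fin 3) R) : Matrix (Fin 3) (Fin 3) R) =
      L v u.1.re (-u.1.im) 0 0 (-1) := by
  rw [Units.val_mul, coe_reflection, coe_rotation, L_mul (Or.inr rfl)]
  exact L_inj.mpr ⟨by ring, by ring, by ring, by ring, by ring⟩

lemma translation_injective : Function.Injective (translation v) := fun m m' h => by
  have h' := L_inj.mp (congrArg Units.val h)
  exact Prod.ext h'.2.2.1 h'.2.2.2.1

lemma rotation_injective : Function.Injective (rotation (v := v)) := fun u u' h => by
  have h' := L_inj.mp (congrArg Units.val h)
  exact NormOne.ext h'.1 h'.2.1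

lemma reflection_notMem_zpowers_rotation (h2 : (2 : R) ≠ 0) (u : NormOne v) :
    reflection v ∉ Subgroup.zpowers (rotation u) := fun h => by
  obtain ⟨u', hu'⟩ := (Subgroup.zpowers_le (H := (rotation (v := v)).range)).mpr ⟨u, rfl⟩ h
  have h' := L_inj.mp (congrArg Units.val hu')
  exact h2 (by linear_combination h'.2.2.2.2)

lemma exists_translation_eq_iff (g : GL (Fin 3) R) :
    (∃ m, translation v m = g) ↔
      ∃ c d : R, (g : Matrix (Fin 3) (Fin 3) R) = !![1, 0, 0; 0, 1, 0; c, d, 1] := by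
  have hL (c d : R) : L v 1 0 c d 1 = !![1, 0, 0; 0, 1, 0; c, d, 1] := by simp [L]
  constructor
  · rintro ⟨m, rfl⟩
    exact ⟨m.toAdd.1, m.toAdd.2, hL _ _⟩
  · rintro ⟨c, d, hg⟩
    exact ⟨.ofAdd (c, d), Units.ext (by rw [coe_translation, hg, ← hL]; rfl)⟩

variable (v) in
def carrierSet : Set (GL (Fin 3) R) :=
  {g | ∃ a b c d s : R, a ^ 2 - v * b ^ 2 = 1 ∧ (s = 1 ∨ s = -1) ∧
    (g : Matrix (Fin 3) (Fin 3) R) = L v a b c d s}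

section Dihedral

open DihedralGroup

variable {n : ℕ} [NeZero n] {u₀ : NormOne v} (hu₀ : u₀ ^ n = 1)

def dihedralAction : DihedralGroup n →* MulAut (Multiplicative (R × R)) :=
  lift (u := rotate u₀) (by rw [← map_pow, hu₀, map_one]) reflect_mul_self
    (by rw [reflect_mul_rotate_mul_reflect, map_inv])

def dihedralEmbedding : DihedralGroup n →* GL (Fin 3) R :=
  lift (u := rotation u₀) (by rw [← map_pow, hu₀, map_one]) reflection_mul_self
    (by rw [reflection_mul_rotation_mul_reflection, map_inv])

lemma translation_dihedralAction (g : DihedralGroup n) (m : Multiplicative (R × R)) :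
    translation v (dihedralAction hu₀ g m) =
      MulAut.conj (dihedralEmbedding hu₀ g) (translation v m) := by
  rcases g with i | i
  · simp only [dihedralAction, dihedralEmbedding, lift_r, ← map_pow, translation_rotate]
  · simp only [dihedralAction, dihedralEmbedding, lift_sr, ← map_pow, MulAut.mul_apply,
      translation_rotate, translation_reflect, map_mul]

def semidirectHom :
    Multiplicative (R × R) ⋊[dihedralAction hu₀] DihedralGroup n →* GL (Fin 3) R :=
  SemidirectProduct.lift (translation v) (dihedralEmbedding hu₀) fun g =>
    MonoidHom.ext (translation_dihedralAction hu₀ g)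

lemma exists_coe_dihedralEmbedding (g : DihedralGroup n) :
    ∃ (u : NormOne v) (s : R), (s = 1 ∨ s = -1) ∧
      (dihedralEmbedding hu₀ g : Matrix (Fin 3) (Fin 3) R) = L v u.1.re u.1.im 0 0 s := by
  rcases g with i | i
  · exact ⟨u₀ ^ i.val, 1, Or.inl rfl, by simp [dihedralEmbedding, ← map_pow]⟩
  · refine ⟨(u₀ ^ i.val)⁻¹, -1, Or.inr rfl, ?_⟩
    simp only [dihedralEmbedding, lift_sr, ← map_pow, coe_reflection_mul_rotation,
      NormOne.re_inv, NormOne.im_inv]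

lemma exists_dihedralEmbedding_eq (hgen : ∀ u : NormOne v, ∃ k : ℕ, u₀ ^ k = u)
    (u : NormOne v) {s : R} (hs : s = 1 ∨ s = -1) :
    ∃ g, (dihedralEmbedding hu₀ g : Matrix (Fin 3) (Fin 3) R) = L v u.1.re u.1.im 0 0 s := by
  rcases hs with rfl | rfl
  · obtain ⟨k, hk⟩ := hgen u
    exact ⟨r k, by rw [dihedralEmbedding, lift_r_natCast, ← map_pow, hk, coe_rotation]⟩
  · obtain ⟨k, hk⟩ := hgen u⁻¹
    refine ⟨sr k, ?_⟩
    rw [dihedralEmbedding, lift_sr_natCast, ← map_pow, hk, coe_reflection_mul_rotation,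
      NormOne.re_inv, NormOne.im_inv, neg_neg]

lemma semidirectHom_injective (h2 : (2 : R) ≠ 0) (hord : orderOf u₀ = n) :
    Function.Injective (semidirectHom hu₀) := by
  refine SemidirectProduct.lift_injective translation_injective
    (lift_injective _ _ _ (by rw [orderOf_injective _ rotation_injective, hord])
      (reflection_notMem_zpowers_rotation h2 u₀)) ?_
  refine Subgroup.disjoint_def.mpr ?_
  rintro _ ⟨m, rfl⟩ ⟨g, hg⟩
  obtain ⟨u, s, -, hgu⟩ := exists_coe_dihedralEmbedding hu₀ g
  have hm := L_inj.mp ((coe_translation m).symm.trans ((congrArg Units.val hg).symm.trans hgu))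
  rw [show m = 1 from Prod.ext hm.2.2.1 hm.2.2.2.1, map_one]

lemma range_semidirectHom (hgen : ∀ u : NormOne v, ∃ k : ℕ, u₀ ^ k = u) :
    ((semidirectHom hu₀).range : Set (GL (Fin 3) R)) = carrierSet v := by
  ext x
  constructor
  · rintro ⟨⟨m, g⟩, rfl⟩
    obtain ⟨u, s, hs, hg⟩ := exists_coe_dihedralEmbedding hu₀ g
    refine ⟨u.1.re, u.1.im, u.1.re * m.toAdd.1 + u.1.im * m.toAdd.2,
      s * (v * u.1.im * m.toAdd.1 + u.1.re * m.toAdd.2), s, u.re_sq_sub_mul_im_sq, hs, ?_⟩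
    change ((translation v m * dihedralEmbedding hu₀ g : GL (Fin 3) R) :
      Matrix (Fin 3) (Fin 3) R) = _
    rw [Units.val_mul, hg, coe_translation, L_mul (Or.inl rfl)]
    exact L_inj.mpr ⟨by ring, by ring, by ring, by ring, by ring⟩
  · rintro ⟨a, b, c, d, s, hab, hs, hx⟩
    obtain ⟨g, hg⟩ := exists_dihedralEmbedding_eq hu₀ hgen (NormOne.mk a b hab) hs
    -- `L(a,b,c,d,s) = L(a,b,0,0,s) · L(1,0,sc,sd,1)`
    refine ⟨.inr g * .inl (.ofAdd (s * c, s * d)), ?_⟩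
    ext : 1
    rw [map_mul, semidirectHom, SemidirectProduct.lift_inr, SemidirectProduct.lift_inl,
      Units.val_mul, hg, coe_translation, hx, L_mul hs]
    rcases hs with rfl | rfl <;>
      exact L_inj.mpr ⟨by simp [NormOne.mk], by simp [NormOne.mk], by simp, by simp, by ring⟩

lemma coe_map_range_inl (hinj : Function.Injective (semidirectHom hu₀)) :
    ((SemidirectProduct.inl.range.map (MonoidHom.ofInjective hinj).toMonoidHom :
        Subgroup (semidirectHom hu₀).range) : Set (semidirectHom hu₀).range) =
      {x : (semidirectHom hu₀).range | ∃ c d : R,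
        ((x : GL (Fin 3) R) : Matrix (Fin 3) (Fin 3) R) = !![1, 0, 0; 0, 1, 0; c, d, 1]} := by
  ext x
  change _ ↔ ∃ c d : R, _
  have he (m : Multiplicative (R × R)) :
      (((MonoidHom.ofInjective hinj).toMonoidHom (.inl m) : (semidirectHom hu₀).range) :
        GL (Fin 3) R) = translation v m := by
    rw [MulEquiv.coe_toMonoidHom, MonoidHom.ofInjective_apply, semidirectHom,
      SemidirectProduct.lift_inl]
  rw [← exists_translation_eq_iff (v := v)]
  constructor
  · rintro ⟨_, ⟨m, rfl⟩, rfl⟩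
    exact ⟨m, (he m).symm⟩
  · rintro ⟨m, hm⟩
    exact ⟨_, ⟨m, rfl⟩, Subtype.ext ((he m).trans hm)⟩

end Dihedral

section FiniteField

variable {F : Type*} [Field F] {v : F}

lemma one_sub_mul_sq_ne_zero (hv : ¬ IsSquare v) (t : F) : 1 - v * t ^ 2 ≠ 0 := fun h => by
  rcases eq_or_ne t 0 with rfl | ht
  · simp at h
  · exact hv ⟨t⁻¹, by field_simp; linear_combination -h⟩

/-- Stereographic projection of the conic `a² - v b² = 1` from the point `(-1, 0)`. -/
def optionEquivNormOne [DecidableEq F] (h2 : (2 : F) ≠ 0) (hv : ¬ IsSquare v) :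
    Option F ≃ NormOne v where
  toFun
    | none => NormOne.mk (-1) 0 (by ring)
    | some t => NormOne.mk ((1 + v * t ^ 2) / (1 - v * t ^ 2)) (2 * t / (1 - v * t ^ 2)) (by
        have := one_sub_mul_sq_ne_zero hv t
        field_simp
        ring)
  invFun u := if u.1.re = -1 then none else some (u.1.im / (u.1.re + 1))
  left_inv
    | none => by simp [NormOne.mk]
    | some t => by
      have hD := one_sub_mul_sq_ne_zero hv t
      have hre : (1 + v * t ^ 2) / (1 - v * t ^ 2) ≠ -1 := by
        rw [Ne, div_eq_iff hD]
        exact fun h => h2 (by linear_combination h)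
      simp only [NormOne.mk, hre, if_false, Option.some.injEq]
      rw [show (1 + v * t ^ 2) / (1 - v * t ^ 2) + 1 = 2 / (1 - v * t ^ 2) by field_simp; ring,
        div_div_div_cancel_right₀ hD, mul_div_cancel_left₀ t h2]
  right_inv u := by
    have hu := u.re_sq_sub_mul_im_sq
    by_cases hre : u.1.re = -1
    · have hv0 : v ≠ 0 := fun h => hv ⟨0, by simp [h]⟩
      have him : u.1.im = 0 := by
        simpa [hv0] using (show v * u.1.im ^ 2 = 0 by rw [hre] at hu; linear_combination -hu)
      simp only [hre, if_true]
      exact NormOne.ext hre.symm him.symm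
    · have hre1 : u.1.re + 1 ≠ 0 := fun h => hre (by linear_combination h)
      have hD := one_sub_mul_sq_ne_zero hv (u.1.im / (u.1.re + 1))
      simp only [hre, if_false]
      refine NormOne.ext ?_ ?_ <;> simp only [NormOne.mk] <;> rw [div_eq_iff hD] <;> field_simp
      · linear_combination (-(u.1.re + 1)) * hu
      · linear_combination (-u.1.im) * hu

lemma card_normOne [Fintype F] (h2 : (2 : F) ≠ 0) (hv : ¬ IsSquare v) :
    Nat.card (NormOne v) = Fintype.card F + 1 := by
  classical
  rw [← Nat.card_congr (optionEquivNormOne h2 hv), Nat.card_eq_fintype_card, Fintype.card_option]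

lemma orderOf_eq_card_add_one [Fintype F] (h2 : (2 : F) ≠ 0) (hv : ¬ IsSquare v)
    {u₀ : NormOne v} (hgen : ∀ u : NormOne v, ∃ k : ℕ, u₀ ^ k = u) :
    orderOf u₀ = Fintype.card F + 1 := by
  rw [orderOf_eq_card_of_forall_mem_zpowers fun u => ?_, card_normOne h2 hv]
  obtain ⟨k, rfl⟩ := hgen u
  exact Subgroup.npow_mem_zpowers u₀ k

end FiniteField

end Gp

open Gp in
/-- For every odd prime `p` (with `v` a fixed non-square unit mod `p`, and `(a₀,b₀)` a
generator of the cyclic norm-one group `{(a,b) : a² − v b² = 1}`), the subgroup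
`N = {L(1,0,c,d,1) : c,d ∈ ℤ/pℤ}` of `G_p` is a normal Sylow `p`-subgroup isomorphic
to `(ℤ/pℤ) × (ℤ/pℤ)`, and `G_p ≅ (ℤ/pℤ)² ⋊ D_{p+1}`, where the dihedral group
`D_{p+1}` of order `2(p+1)` acts by the rotation `[[a₀, −b₀],[−v b₀, a₀]]` and the
reflection `diag(−1, 1)`. -/
theorem Gp_structure (p : ℕ) [Fact p.Prime] (hp : Odd p)
    (v : ZMod p) (hv : ¬ IsSquare v) (a₀ b₀ : ZMod p)
    (hab : a₀ ^ 2 - v * b₀ ^ 2 = 1)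
    -- `(a₀, b₀)` generates the norm-one group under its multiplication
    (hgen : ∃ g : ℕ → ZMod p × ZMod p, g 0 = (1, 0) ∧
      (∀ n, g (n + 1) = (a₀ * (g n).1 + v * b₀ * (g n).2,
                         a₀ * (g n).2 + b₀ * (g n).1)) ∧
      ∀ x : ZMod p × ZMod p, x.1 ^ 2 - v * x.2 ^ 2 = 1 → ∃ n, g n = x) :
    ∃ H : Subgroup (GL (Fin 3) (ZMod p)),
      -- `H` is the group `G_p` of matrices `L(a,b,c,d,s)`
      ((H : Set (GL (Fin 3) (ZMod p))) =
        {L : GL (Fin 3) (ZMod p) | ∃ a b c d s : ZMod p, a ^ 2 - v * b ^ 2 = 1 ∧ (s = 1 ∨ s = -1) ∧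
          (L : Matrix (Fin 3) (Fin 3) (ZMod p)) =
            !![a, s * v * b, 0; b, s * a, 0; c, d, s]}) ∧
      ∃ N : Subgroup H,
        -- `N` is the set of matrices `L(1,0,c,d,1)`
        ((N : Set H) = {L : H | ∃ c d : ZMod p,
          ((L : GL (Fin 3) (ZMod p)) : Matrix (Fin 3) (Fin 3) (ZMod p)) =
            !![1, 0, 0; 0, 1, 0; c, d, 1]}) ∧
        -- `N` is a normal Sylow `p`-subgroup of `G_p`
        N.Normal ∧ (∃ P : Sylow p H, (P : Subgroup H) = N) ∧
        -- `N ≅ (ℤ/pℤ) × (ℤ/pℤ)`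
        Nonempty (N ≃* Multiplicative (ZMod p × ZMod p)) ∧
        -- `G_p ≅ (ℤ/pℤ)² ⋊ D_{p+1}` with the prescribed dihedral action
        ∃ ψ : DihedralGroup (p + 1) →* MulAut (Multiplicative (ZMod p × ZMod p)),
          (∀ c d : ZMod p, ψ (DihedralGroup.r 1) (Multiplicative.ofAdd (c, d)) =
            Multiplicative.ofAdd (a₀ * c - b₀ * d, a₀ * d - v * b₀ * c)) ∧
          (∀ c d : ZMod p, ψ (DihedralGroup.sr 0) (Multiplicative.ofAdd (c, d)) =
            Multiplicative.ofAdd (-c, d)) ∧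
          Nonempty (H ≃* Multiplicative (ZMod p × ZMod p) ⋊[ψ] DihedralGroup (p + 1)) := by
  have hprime : p.Prime := Fact.out
  have h2 : (2 : ZMod p) ≠ 0 := Ring.two_ne_zero (by
    rw [ZMod.ringChar_zmod_n]; rintro rfl; exact absurd hp (by decide))
  have : Fact (1 < p + 1) := ⟨Nat.succ_lt_succ hprime.pos⟩
  set u₀ := NormOne.mk a₀ b₀ hab
  have hgen' : ∀ u : NormOne v, ∃ k : ℕ, u₀ ^ k = u := exists_pow_eq_of_recursion hgen
  have hord : orderOf u₀ = p + 1 := by rw [orderOf_eq_card_add_one h2 hv hgen', ZMod.card]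
  have hu₀ : u₀ ^ (p + 1) = 1 := hord ▸ pow_orderOf_eq_one u₀
  set e := MonoidHom.ofInjective (semidirectHom_injective hu₀ h2 hord)
  have hN : IsPGroup p (SemidirectProduct.inl.range.map e.toMonoidHom) := .of_card (n := 2) (by
    rw [Nat.card_congr (SemidirectProduct.mapRangeInlEquiv e).toEquiv, Nat.card_eq_fintype_card,
      Fintype.card_multiplicative, Fintype.card_prod, ZMod.card, sq])
  have hindex : ¬ p ∣ (SemidirectProduct.inl.range.map e.toMonoidHom).index := by
    rw [SemidirectProduct.index_map_range_inl, DihedralGroup.nat_card]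
    exact hprime.not_dvd_two_mul_succ hp
  refine ⟨_, range_semidirectHom hu₀ hgen', _, coe_map_range_inl hu₀ _,
    SemidirectProduct.normal_map_range_inl e, ⟨hN.toSylow hindex, rfl⟩,
    ⟨SemidirectProduct.mapRangeInlEquiv e⟩, dihedralAction hu₀, fun c d => ?_, fun c d => ?_,
    ⟨e.symm⟩⟩
  · rw [dihedralAction, DihedralGroup.lift_r_one]
    rfl
  · rw [dihedralAction, DihedralGroup.lift_sr_zero]
    rfl
end
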